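/- Let d ∈ ℕ, let x : ℝ → ℝ^d be twice continuously differentiable and let U : ℝ^d → ℝ be twice continuously differentiable. Suppose: (i) sup_{t∈ℝ} U(x(t)) < ∞; (ii) r₀ := sup_{t∈ℝ} ‖∇U(x(t))‖ satisfies 0 < r₀ < ∞; (iii) r₂ := sup_{t∈ℝ} ‖ẍ(t)‖ < ∞; and (iv) there is λ > 0 such that for every t ∈ ℝ and every ξ ∈ ℝ^d, ⟨Hess U(x(t)) ξ, ξ⟩ ≥ λ‖ξ‖². Then sup_{t∈ℝ} ‖ẋ(t)‖² ≤ (C²/λ)·r₀·r₂, where C = 2·cos(π/9) is the positive root of ζ³ − 3ζ − 1 = 0. -/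

import Mathlib

/-!
Put `h = (U ∘ x)' = ⟨∇U(x), ẋ⟩`. Then `|h| ≤ r₀ ‖ẋ‖` and
`h' = Hess U(x)(ẋ, ẋ) + ⟨∇U(x), ẍ⟩ ≥ λ ‖ẋ‖² - r₀ r₂`, so with `s₀² = r₀ r₂ / λ` the function `h`
satisfies the Riccati inequality `h' ≥ (λ / r₀²) (h² - (r₀ s₀)²)`. A solution defined on all of `ℝ`
cannot leave `[-r₀ s₀, r₀ s₀]`: it would blow up in finite time, forward or backward.
If now `s = ‖ẋ(t₀)‖ > s₀`, then `‖ẋ‖ ≥ s - r₂ |t - t₀| ≥ s₀` on a window of half-width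
`(s - s₀) / r₂`. Integrating `h' ≥ λ ((s - r₂ |t - t₀|)² - s₀²)` over the window and using
`|h| ≤ r₀ s₀` at its ends gives `λ (s - s₀)² (s + 2 s₀) ≤ 3 r₂ · r₀ s₀ = 3 λ s₀³`,
that is `s³ ≤ 3 s₀² s + s₀³`.
The largest root of this cubic is `s = 2 cos(π/9) s₀`.
-/

open Real Set Filter

theorem two_cos_pi_div_nine_pow_three :
    (2 * cos (π / 9)) ^ 3 = 3 * (2 * cos (π / 9)) + 1 := by
  have h := cos_three_mul (π / 9)
  rw [show 3 * (π / 9) = π / 3 by ring, cos_pi_div_three] at h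
  linear_combination (-2 : ℝ) * h

theorem one_lt_two_cos_pi_div_nine : 1 < 2 * cos (π / 9) := by
  have h : cos (π / 3) < cos (π / 9) :=
    cos_lt_cos_of_nonneg_of_le_pi (by positivity) (by linarith [pi_pos]) (by linarith [pi_pos])
  rw [cos_pi_div_three] at h
  linarith

theorem le_two_cos_pi_div_nine_mul {s s₀ : ℝ} (hs₀ : 0 ≤ s₀)
    (h : s ^ 3 ≤ 3 * s₀ ^ 2 * s + s₀ ^ 3) : s ≤ 2 * cos (π / 9) * s₀ := by
  set C := 2 * cos (π / 9)
  have hC := two_cos_pi_div_nine_pow_three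
  have hC1 := one_lt_two_cos_pi_div_nine
  by_contra! hlt
  have hfactor : s ^ 3 - 3 * s₀ ^ 2 * s - s₀ ^ 3
      = (s - C * s₀) * (s ^ 2 + C * s₀ * s + (C ^ 2 - 3) * s₀ ^ 2) := by
    linear_combination s₀ ^ 3 * hC
  have hs : 0 < s := lt_of_le_of_lt (by positivity) hlt
  have hpos : 0 < s ^ 2 + C * s₀ * s + (C ^ 2 - 3) * s₀ ^ 2 := by
    nlinarith [mul_le_mul hlt.le hlt.le (by positivity) hs.le, mul_nonneg hs₀ hs.le]
  nlinarith [mul_pos (sub_pos.2 hlt) hpos]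

theorem sub_le_sub_of_hasDerivAt_le {f g f' g' : ℝ → ℝ} {a b : ℝ} (hab : a ≤ b)
    (hf : ∀ t ∈ Icc a b, HasDerivAt f (f' t) t) (hg : ∀ t ∈ Icc a b, HasDerivAt g (g' t) t)
    (hle : ∀ t ∈ Ioo a b, g' t ≤ f' t) : g b - g a ≤ f b - f a := by
  have hmono : MonotoneOn (fun t => f t - g t) (Icc a b) := by
    refine monotoneOn_of_hasDerivWithinAt_nonneg (f' := fun t => f' t - g' t) (convex_Icc a b)
      (fun t ht => ((hf t ht).sub (hg t ht)).continuousAt.continuousWithinAt) (fun t ht => ?_)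
      (fun t ht => ?_)
    · rw [interior_Icc] at ht
      exact ((hf t (Ioo_subset_Icc_self ht)).sub (hg t (Ioo_subset_Icc_self ht))).hasDerivWithinAt
    · rw [interior_Icc] at ht
      exact sub_nonneg.2 (hle t ht)
  linarith [hmono (left_mem_Icc.2 hab) (right_mem_Icc.2 hab) hab]

theorem hasDerivAt_neg_comp_neg {h : ℝ → ℝ} {h' t : ℝ} (hh : HasDerivAt h h' (-t)) :
    HasDerivAt (fun u => -h (-u)) h' t := by
  have hcomp : HasDerivAt (fun u => h (-u)) (h' * -1) t := hh.comp t (hasDerivAt_neg t)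
  simpa using hcomp.fun_neg

theorem le_of_riccati {h h' : ℝ → ℝ} {a K : ℝ} (hh : ∀ t, HasDerivAt h (h' t) t) (ha : 0 < a)
    (hK : 0 ≤ K) (hric : ∀ t, a * (h t ^ 2 - K ^ 2) ≤ h' t) (t₀ : ℝ) : h t₀ ≤ K := by
  by_contra! hlt
  set c := h t₀
  have hstay : ∀ t, t₀ ≤ t → c ≤ h t := by
    intro t ht
    have hfence := image_le_of_deriv_right_lt_deriv_boundary (f := fun u => -h u)
      (f' := fun u => -h' u) (B := fun _ => -c) (B' := fun _ => 0)
      (fun u _ => (hh u).fun_neg.continuousAt.continuousWithinAt)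
      (fun u _ => (hh u).fun_neg.hasDerivWithinAt) le_rfl (fun _ => hasDerivAt_const _ _)
      (fun u _ hu => by
        have hpos : 0 < a * (c ^ 2 - K ^ 2) := mul_pos ha (by nlinarith)
        have hric_u := hric u
        rw [neg_inj.1 hu] at hric_u
        linarith) ⟨ht, le_rfl⟩
    linarith
  -- above `K`, `a (h² - K²) ≥ a (h - K)²`, so `1 / (h - K)` decreases at rate at least `a`
  have hblow : ∀ t, t₀ ≤ t → a * (t - t₀) ≤ (c - K)⁻¹ - (h t - K)⁻¹ := by
    intro t ht
    have hpos : ∀ u, t₀ ≤ u → 0 < h u - K := fun u hu => by linarith [hstay u hu]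
    have hcmp := sub_le_sub_of_hasDerivAt_le (f := fun u => -(h u - K)⁻¹)
      (f' := fun u => h' u / (h u - K) ^ 2) (g := fun u => a * u) (g' := fun _ => a) ht
      (fun u hu => by
        simpa [neg_div] using (((hh u).sub_const K).inv (hpos u hu.1).ne').fun_neg)
      (fun u _ => by simpa using (hasDerivAt_id u).const_mul a)
      (fun u hu => by
        have hu' := hpos u hu.1.le
        rw [le_div_iff₀ (by positivity)]
        nlinarith [hric u, mul_nonneg ha.le (mul_nonneg hK hu'.le)])
    linarith
  have hc : 0 < c - K := by linarith
  set T := t₀ + (a * (c - K))⁻¹ with hT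
  have hT₀ : t₀ ≤ T := by linarith [inv_pos.2 (mul_pos ha hc)]
  have haT : a * (T - t₀) = (c - K)⁻¹ := by
    rw [hT, add_sub_cancel_left, mul_inv, ← mul_assoc, mul_inv_cancel₀ ha.ne', one_mul]
  have hinv : 0 < (h T - K)⁻¹ := inv_pos.2 (by linarith [hstay T hT₀])
  linarith [hblow T hT₀]

theorem abs_le_of_riccati {h h' : ℝ → ℝ} {a K : ℝ} (hh : ∀ t, HasDerivAt h (h' t) t)
    (ha : 0 < a) (hK : 0 ≤ K) (hric : ∀ t, a * (h t ^ 2 - K ^ 2) ≤ h' t) (t₀ : ℝ) :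
    |h t₀| ≤ K := by
  have hreflect := le_of_riccati (h := fun u => -h (-u)) (h' := fun u => h' (-u))
    (fun u => hasDerivAt_neg_comp_neg (hh (-u))) ha hK (fun u => by simpa using hric (-u)) (-t₀)
  simp only [neg_neg] at hreflect
  exact abs_le.2 ⟨by linarith, le_of_riccati hh ha hK hric t₀⟩

theorem mul_sq_sub_mul_le_three_mul_sub {h h' v : ℝ → ℝ} {lam R s₀ t₀ : ℝ}
    (hh : ∀ t, HasDerivAt h (h' t) t) (hlam : 0 ≤ lam) (hR : 0 < R) (hs₀ : 0 ≤ s₀)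
    (hs : s₀ ≤ v t₀) (hv : ∀ t, v t₀ - R * |t - t₀| ≤ v t)
    (hder : ∀ t, lam * (v t ^ 2 - s₀ ^ 2) ≤ h' t) :
    lam * (v t₀ - s₀) ^ 2 * (v t₀ + 2 * s₀) ≤ 3 * R * (h (t₀ + (v t₀ - s₀) / R) - h t₀) := by
  set s := v t₀
  set w := (s - s₀) / R with hw
  have hRw : R * w = s - s₀ := by rw [hw]; field_simp
  have hw₀ : 0 ≤ w := div_nonneg (by linarith) hR.le
  -- compare `h` with the antiderivative of `lam (q² - s₀²)`, where `q t = s - R (t - t₀)` is the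
  -- lower bound for `v` on the window `[t₀, t₀ + w]`
  have hcmp := sub_le_sub_of_hasDerivAt_le (f := h) (f' := h')
    (g := fun t => -(lam / (3 * R)) * (s - R * (t - t₀)) ^ 3 - lam * s₀ ^ 2 * t)
    (g' := fun t => lam * ((s - R * (t - t₀)) ^ 2 - s₀ ^ 2)) (le_add_of_nonneg_right hw₀)
    (fun t _ => hh t)
    (fun t _ => by
      have hq : HasDerivAt (fun t => s - R * (t - t₀)) (-R) t := by
        simpa using (((hasDerivAt_id' t).sub_const t₀).const_mul R).const_sub s
      refine (((hq.fun_pow 3).const_mul (-(lam / (3 * R)))).fun_sub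
        ((hasDerivAt_id' t).const_mul (lam * s₀ ^ 2))).congr_deriv ?_
      field_simp
      ring)
    (fun t ht => by
      have hq₀ : s₀ ≤ s - R * (t - t₀) := by nlinarith [ht.2]
      have hqv : s - R * (t - t₀) ≤ v t := by
        simpa [abs_of_pos (sub_pos.2 ht.1)] using hv t
      have hsq : (s - R * (t - t₀)) ^ 2 ≤ v t ^ 2 := pow_le_pow_left₀ (by linarith) hqv 2
      nlinarith [hder t, mul_le_mul_of_nonneg_left hsq hlam])
  have hg : (-(lam / (3 * R)) * (s - R * (t₀ + w - t₀)) ^ 3 - lam * s₀ ^ 2 * (t₀ + w)) -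
      (-(lam / (3 * R)) * (s - R * (t₀ - t₀)) ^ 3 - lam * s₀ ^ 2 * t₀) =
      lam * (s - s₀) ^ 2 * (s + 2 * s₀) / (3 * R) := by
    rw [add_sub_cancel_left, hRw, sub_self, mul_zero, sub_zero, hw]
    field_simp
    ring
  rw [hg, div_le_iff₀ (by positivity)] at hcmp
  linarith

theorem mul_sq_sub_mul_le_three_mul {h h' v : ℝ → ℝ} {lam R s₀ M t₀ : ℝ}
    (hh : ∀ t, HasDerivAt h (h' t) t) (hlam : 0 ≤ lam) (hR : 0 < R) (hs₀ : 0 ≤ s₀)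
    (hs : s₀ ≤ v t₀) (hv : ∀ t, v t₀ - R * |t - t₀| ≤ v t)
    (hder : ∀ t, lam * (v t ^ 2 - s₀ ^ 2) ≤ h' t) (hM : ∀ t, |h t| ≤ M) :
    lam * (v t₀ - s₀) ^ 2 * (v t₀ + 2 * s₀) ≤ 3 * R * M := by
  have hforward := mul_sq_sub_mul_le_three_mul_sub hh hlam hR hs₀ hs hv hder
  have hbackward := mul_sq_sub_mul_le_three_mul_sub (h := fun u => -h (-u)) (h' := fun u => h' (-u))
    (v := fun u => v (-u)) (t₀ := -t₀) (fun u => hasDerivAt_neg_comp_neg (hh (-u))) hlam hR hs₀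
    (by simpa using hs) (fun u => by
      have hvu := hv (-u)
      rw [show -u - t₀ = -(u - -t₀) by ring, abs_neg] at hvu
      simpa using hvu)
    (fun u => hder (-u))
  simp only [neg_neg] at hbackward
  have hw := abs_le.1 (hM (t₀ + (v t₀ - s₀) / R))
  have hw' := abs_le.1 (hM (-(-t₀ + (v t₀ - s₀) / R)))
  nlinarith

theorem le_two_cos_pi_div_nine_mul_sqrt {h h' v : ℝ → ℝ} {r₀ R lam t₀ : ℝ}
    (hh : ∀ t, HasDerivAt h (h' t) t) (hr₀ : 0 < r₀) (hR : 0 < R) (hlam : 0 < lam)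
    (hhv : ∀ t, |h t| ≤ r₀ * v t) (hder : ∀ t, lam * v t ^ 2 - r₀ * R ≤ h' t)
    (hv : ∀ t, v t₀ - R * |t - t₀| ≤ v t) :
    v t₀ ≤ 2 * cos (π / 9) * √(r₀ * R / lam) := by
  set s₀ := √(r₀ * R / lam)
  have hs₀ : 0 ≤ s₀ := sqrt_nonneg _
  have hlam_s₀ : lam * s₀ ^ 2 = r₀ * R := by
    rw [sq_sqrt (by positivity)]
    field_simp
  have hder' : ∀ t, lam * (v t ^ 2 - s₀ ^ 2) ≤ h' t := fun t => by linarith [hder t]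
  have hv₀ : ∀ t, 0 ≤ v t := fun t =>
    nonneg_of_mul_nonneg_right ((abs_nonneg _).trans (hhv t)) hr₀
  have hM : ∀ t, |h t| ≤ r₀ * s₀ := by
    refine abs_le_of_riccati hh (by positivity : 0 < lam / r₀ ^ 2) (by positivity) fun t => ?_
    have hsq : h t ^ 2 ≤ (r₀ * v t) ^ 2 := by
      simpa only [sq_abs] using pow_le_pow_left₀ (abs_nonneg _) (hhv t) 2
    have hric : lam / r₀ ^ 2 * (h t ^ 2 - (r₀ * s₀) ^ 2) ≤ lam * (v t ^ 2 - s₀ ^ 2) := by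
      rw [show lam * (v t ^ 2 - s₀ ^ 2) = lam / r₀ ^ 2 * ((r₀ * v t) ^ 2 - (r₀ * s₀) ^ 2) by
        field_simp]
      gcongr
    exact hric.trans (hder' t)
  have hcubic : v t₀ ^ 3 ≤ 3 * s₀ ^ 2 * v t₀ + s₀ ^ 3 := by
    rcases le_or_gt (v t₀) s₀ with hle | hlt
    · nlinarith [pow_le_pow_left₀ (hv₀ t₀) hle 3, mul_nonneg (sq_nonneg s₀) (hv₀ t₀)]
    · have hgain := mul_sq_sub_mul_le_three_mul hh hlam.le hR hs₀ hlt.le hv hder' hM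
      have hRs₀ : 3 * R * (r₀ * s₀) = lam * (3 * s₀ ^ 3) := by
        linear_combination 3 * s₀ * hlam_s₀.symm
      rw [hRs₀, mul_assoc, mul_le_mul_iff_right₀ hlam] at hgain
      linear_combination hgain
  exact le_two_cos_pi_div_nine_mul hs₀ hcubic

theorem hasDerivAt_fderiv_apply_deriv {E F : Type*} [NormedAddCommGroup E] [NormedSpace ℝ E]
    [NormedAddCommGroup F] [NormedSpace ℝ F] {x : ℝ → E} {U : E → F} (hx : ContDiff ℝ 2 x)
    (hU : ContDiff ℝ 2 U) (t : ℝ) :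
    HasDerivAt (fun t => fderiv ℝ U (x t) (deriv x t))
      (iteratedFDeriv ℝ 2 U (x t) ![deriv x t, deriv x t] + fderiv ℝ U (x t) (deriv (deriv x) t))
      t := by
  have hU' : Differentiable ℝ (fderiv ℝ U) :=
    (hU.fderiv_right (m := 1) le_rfl).differentiable one_ne_zero
  have hDU : HasDerivAt (fun s => fderiv ℝ U (x s)) (fderiv ℝ (fderiv ℝ U) (x t) (deriv x t)) t :=
    (hU' (x t)).hasFDerivAt.comp_hasDerivAt t ((hx.differentiable two_ne_zero) t).hasDerivAt
  rw [iteratedFDeriv_two_apply]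
  simpa using hDU.clm_apply (hx.differentiable_deriv_two t).hasDerivAt

theorem norm_deriv_le_two_cos_pi_div_nine_mul_sqrt {E : Type*} [NormedAddCommGroup E]
    [NormedSpace ℝ E] {x : ℝ → E} {U : E → ℝ} {r₀ R lam : ℝ} (hx : ContDiff ℝ 2 x)
    (hU : ContDiff ℝ 2 U) (hr₀ : 0 < r₀) (hR : 0 < R) (hlam : 0 < lam)
    (hDU : ∀ t, ‖fderiv ℝ U (x t)‖ ≤ r₀) (hacc : ∀ t, ‖deriv (deriv x) t‖ ≤ R)
    (hHess : ∀ t ξ, lam * ‖ξ‖ ^ 2 ≤ iteratedFDeriv ℝ 2 U (x t) ![ξ, ξ]) (t₀ : ℝ) :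
    ‖deriv x t₀‖ ≤ 2 * cos (π / 9) * √(r₀ * R / lam) := by
  have hDU_apply : ∀ t v, |fderiv ℝ U (x t) v| ≤ r₀ * ‖v‖ := fun t v =>
    ((fderiv ℝ U (x t)).le_opNorm v).trans (mul_le_mul_of_nonneg_right (hDU t) (norm_nonneg v))
  refine le_two_cos_pi_div_nine_mul_sqrt (fun t => hasDerivAt_fderiv_apply_deriv hx hU t)
    hr₀ hR hlam (fun t => hDU_apply t _) (fun t => ?_) (fun t => ?_)
  · have hDU_acc := (abs_le.1 (hDU_apply t (deriv (deriv x) t))).1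
    nlinarith [hHess t (deriv x t), hacc t]
  · have hlip : ‖deriv x t - deriv x t₀‖ ≤ R * ‖t - t₀‖ :=
      convex_univ.norm_image_sub_le_of_norm_deriv_le (fun s _ => hx.differentiable_deriv_two s)
        (fun s _ => hacc s) (mem_univ t₀) (mem_univ t)
    rw [Real.norm_eq_abs] at hlip
    linarith [norm_sub_norm_le (deriv x t₀) (deriv x t), norm_sub_rev (deriv x t₀) (deriv x t)]

theorem landau_hadamard_euclidean_general (d : ℕ)
    (x : ℝ → EuclideanSpace ℝ (Fin d)) (U : EuclideanSpace ℝ (Fin d) → ℝ)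
    (hx : ContDiff ℝ 2 x) (hU : ContDiff ℝ 2 U)
    (r₀ : ℝ) (hr₀ : r₀ = ⨆ t : ℝ, ‖gradient U (x t)‖)
    (hr₀bdd : BddAbove (Set.range fun t => ‖gradient U (x t)‖)) (hr₀pos : 0 < r₀)
    (r₂ : ℝ) (hr₂ : r₂ = ⨆ t : ℝ, ‖deriv (deriv x) t‖)
    (hr₂bdd : BddAbove (Set.range fun t => ‖deriv (deriv x) t‖))
    (lam : ℝ) (hlam : 0 < lam)
    (hHess : ∀ t : ℝ, ∀ ξ : EuclideanSpace ℝ (Fin d),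
      lam * ‖ξ‖ ^ 2 ≤ iteratedFDeriv ℝ 2 U (x t) ![ξ, ξ]) :
    ∀ t : ℝ, ‖deriv x t‖ ^ 2 ≤ ((2 * Real.cos (Real.pi / 9)) ^ 2 / lam) * r₀ * r₂ := by
  intro t
  have hDU : ∀ u, ‖fderiv ℝ U (x u)‖ ≤ r₀ := fun u => by
    have hgrad : ‖gradient U (x u)‖ ≤ r₀ := hr₀ ▸ le_ciSup hr₀bdd u
    simpa only [gradient, LinearIsometryEquiv.norm_map] using hgrad
  have hacc : ∀ u, ‖deriv (deriv x) u‖ ≤ r₂ := fun u => hr₂ ▸ le_ciSup hr₂bdd u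
  -- the window argument needs a strictly positive bound on `ẍ`, so let it decrease to `r₂`
  have hbound : ∀ R, r₂ < R → ‖deriv x t‖ ^ 2 ≤ (2 * cos (π / 9)) ^ 2 / lam * r₀ * R := by
    intro R hR
    have hR₀ : 0 < R := ((norm_nonneg _).trans (hacc 0)).trans_lt hR
    have hnorm := norm_deriv_le_two_cos_pi_div_nine_mul_sqrt hx hU hr₀pos hR₀ hlam hDU
      (fun u => (hacc u).trans hR.le) hHess t
    calc ‖deriv x t‖ ^ 2 ≤ (2 * cos (π / 9) * √(r₀ * R / lam)) ^ 2 :=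
          pow_le_pow_left₀ (norm_nonneg _) hnorm 2
      _ = (2 * cos (π / 9)) ^ 2 / lam * r₀ * R := by
          rw [mul_pow, sq_sqrt (by positivity)]
          ring
  exact ge_of_tendsto (((continuous_const_mul _).tendsto r₂).mono_left nhdsWithin_le_nhds)
    (eventually_nhdsWithin_of_forall (s := Ioi r₂) hbound)

/-- Landau–Hadamard type inequality in `ℝ^d` (Theorem 1 of the paper, flat case):
if `U∘x` is bounded above, `r₀ = sup ‖∇U(x(t))‖ ∈ (0,∞)`, `r₂ = sup ‖ẍ(t)‖ < ∞`, and
the Hessian of `U` along the curve is uniformly positive definite with constant `λ > 0`,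
then `sup ‖ẋ(t)‖² ≤ (C²/λ)·r₀·r₂`, where `C = 2cos(π/9)` is the positive root of
`ζ³ − 3ζ − 1 = 0`. -/
theorem landau_hadamard_euclidean (d : ℕ)
    (x : ℝ → EuclideanSpace ℝ (Fin d)) (U : EuclideanSpace ℝ (Fin d) → ℝ)
    (hx : ContDiff ℝ 2 x) (hU : ContDiff ℝ 2 U)
    (hUbdd : BddAbove (Set.range fun t => U (x t)))
    (r₀ : ℝ) (hr₀ : r₀ = ⨆ t : ℝ, ‖gradient U (x t)‖)
    (hr₀bdd : BddAbove (Set.range fun t => ‖gradient U (x t)‖)) (hr₀pos : 0 < r₀)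
    (r₂ : ℝ) (hr₂ : r₂ = ⨆ t : ℝ, ‖deriv (deriv x) t‖)
    (hr₂bdd : BddAbove (Set.range fun t => ‖deriv (deriv x) t‖))
    (lam : ℝ) (hlam : 0 < lam)
    (hHess : ∀ t : ℝ, ∀ ξ : EuclideanSpace ℝ (Fin d),
      lam * ‖ξ‖ ^ 2 ≤ iteratedFDeriv ℝ 2 U (x t) ![ξ, ξ]) :
    ∀ t : ℝ, ‖deriv x t‖ ^ 2 ≤ ((2 * Real.cos (Real.pi / 9)) ^ 2 / lam) * r₀ * r₂ :=
  landau_hadamard_euclidean_general d x U hx hU r₀ hr₀ hr₀bdd hr₀pos r₂ hr₂ hr₂bdd lam hlam hHess
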